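/- arXiv:2111.13276 — 6 statements merged into one kernel-verified Lean document; each statement's English description precedes it below -/
import Mathlib

section
/- For every natural number n, F_n ≡ 5 (mod 10) if and only if 5 divides n and 15 does not divide n. -/
private lemma fib_per (n : ℕ) : Nat.fib (n + 60) % 10 = Nat.fib n % 10 := by
  have h : Nat.fib (n + 59 + 1) = Nat.fib n * Nat.fib 59 + Nat.fib (n + 1) * Nat.fib 60 :=
    Nat.fib_add n 59
  have h59 : Nat.fib 59 % 10 = 1 := by decide
  have h60 : Nat.fib 60 % 10 = 0 := by decide
  have e : n + 60 = n + 59 + 1 := by ring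
  rw [e, h]
  rw [Nat.add_mod, Nat.mul_mod, Nat.mul_mod (Nat.fib (n + 1)), h59, h60]
  simp [Nat.mod_mod]

private lemma fib_per' : ∀ q r : ℕ, Nat.fib (60 * q + r) % 10 = Nat.fib r % 10 := by
  intro q
  induction q with
  | zero => simp
  | succ q ih =>
    intro r
    have e : 60 * (q + 1) + r = (60 * q + r) + 60 := by ring
    rw [e, fib_per, ih]

theorem fib_mod_ten_eq_five_iff (n : ℕ) :
    Nat.fib n % 10 = 5 ↔ 5 ∣ n ∧ ¬ (15 ∣ n) := by
  have key : ∀ r < 60, (Nat.fib r % 10 = 5 ↔ 5 ∣ r ∧ ¬ (15 ∣ r)) := by decide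
  have hn : n = 60 * (n / 60) + n % 60 := (Nat.div_add_mod' n 60).symm ▸ by omega
  have h1 : Nat.fib n % 10 = Nat.fib (n % 60) % 10 := by
    conv_lhs => rw [hn]
    exact fib_per' _ _
  have h5 : 5 ∣ n ↔ 5 ∣ n % 60 := by omega
  have h15 : 15 ∣ n ↔ 15 ∣ n % 60 := by omega
  rw [h1, h5, h15]
  exact key _ (Nat.mod_lt _ (by norm_num))
end

section
/- If r is a positive integer with r ≡ 1 (mod 4) and 3 does not divide r, then 1 + F_{1-r} ≡ F_{r+1} (mod 10), where F is the Fibonacci sequence extended to negative indices by F_{-n} = (-1)^{n+1} F_n. -/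
/-- The Fibonacci sequence extended to all integers via `F₋ₙ = (-1)^(n+1) Fₙ`. -/
noncomputable def fibZ (n : ℤ) : ℤ :=
  if 0 ≤ n then (Nat.fib n.toNat : ℤ)
  else (-1) ^ ((-n).toNat + 1) * (Nat.fib (-n).toNat : ℤ)

lemma fib_mod10_step (n : ℕ) : ((Nat.fib (n + 60) : ZMod 10)) = Nat.fib n := by
  have h : Nat.fib (n + 59 + 1) = Nat.fib n * Nat.fib 59 + Nat.fib (n+1) * Nat.fib 60 :=
    Nat.fib_add n 59
  have h59 : ((Nat.fib 59 : ZMod 10)) = 1 := by decide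
  have h60 : ((Nat.fib 60 : ZMod 10)) = 0 := by decide
  have e : n + 60 = n + 59 + 1 := rfl
  rw [e, h]
  push_cast
  rw [h59, h60]
  ring

lemma fib_mod10_per (q n : ℕ) : ((Nat.fib (n + 60 * q) : ZMod 10)) = Nat.fib n := by
  induction q with
  | zero => simp
  | succ k ih =>
    have e : n + 60 * (k+1) = (n + 60 * k) + 60 := by ring
    rw [e, fib_mod10_step, ih]

theorem one_add_fib_one_sub_r (r : ℕ) (hr : 0 < r) (h4 : r % 4 = 1) (h3 : ¬ (3 ∣ r)) :
    1 + fibZ (1 - (r : ℤ)) ≡ fibZ ((r : ℤ) + 1) [ZMOD 10] := by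
  obtain ⟨m, rfl⟩ : ∃ m, r = m + 1 := ⟨r - 1, (Nat.succ_pred_eq_of_pos hr).symm⟩
  have hm4 : m % 4 = 0 := by omega
  have hm3 : m % 3 ≠ 2 := by
    intro h; exact h3 (Nat.dvd_of_mod_eq_zero (by omega))
  -- rewrite fibZ values
  have hneg : fibZ (1 - ((m + 1 : ℕ) : ℤ)) = -(Nat.fib m : ℤ) := by
    have e : (1 : ℤ) - ((m + 1 : ℕ) : ℤ) = -(m : ℤ) := by push_cast; ring
    rw [e]
    rcases Nat.eq_zero_or_pos m with h0 | hpos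
    · subst h0; simp [fibZ]
    · have hlt : ¬ (0 ≤ -(m : ℤ)) := by omega
      rw [fibZ, if_neg hlt]
      have : (-(-(m:ℤ))).toNat = m := by omega
      rw [this]
      have hev : (-1 : ℤ) ^ (m + 1) = -1 := by
        have : Even m := Nat.even_iff.mpr (by omega)
        rcases this with ⟨k, hk⟩
        subst hk
        rw [pow_succ]
        simp [pow_mul]
      rw [hev]; ring
  have hpos2 : fibZ (((m + 1 : ℕ) : ℤ) + 1) = (Nat.fib (m + 2) : ℤ) := by
    rw [fibZ, if_pos (by positivity)]
    norm_num
    rfl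
  rw [hneg, hpos2, Int.ModEq]
  have key : ((Nat.fib (m + 2) : ZMod 10)) + Nat.fib m = 1 := by
    obtain ⟨q, t, ht, rfl⟩ : ∃ q t, t < 60 ∧ m = t + 60 * q :=
      ⟨m / 60, m % 60, Nat.mod_lt _ (by norm_num), by omega⟩
    have e : t + 60 * q + 2 = (t + 2) + 60 * q := by ring
    rw [e, fib_mod10_per, fib_mod10_per]
    have ht4 : t % 4 = 0 := by omega
    have ht3 : t % 3 ≠ 2 := by omega
    interval_cases t <;> first | (exfalso; omega) | decide
  have := (ZMod.intCast_eq_intCast_iff (1 + -(Nat.fib m : ℤ)) (Nat.fib (m+2) : ℤ) 10).mp ?_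
  · exact this
  · push_cast
    rw [← key]
    ring
end

section
/- If r is a positive integer with r ≡ 3 (mod 4) and 3 does not divide r, then 1 + F_{r+1} ≡ F_{1-r} (mod 10), where F is the Fibonacci sequence extended to negative indices by F_{-n} = (-1)^{n+1} F_n. -/
lemma fib_add_60 (m : ℕ) : Nat.fib (m + 60) ≡ Nat.fib m [MOD 10] := by
  have h : Nat.fib (m + 59 + 1) = Nat.fib m * Nat.fib 59 + Nat.fib (m + 1) * Nat.fib 60 :=
    Nat.fib_add m 59
  have h59 : Nat.fib 59 ≡ 1 [MOD 10] := by decide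
  have h60 : Nat.fib 60 ≡ 0 [MOD 10] := by decide
  calc Nat.fib (m + 60) = Nat.fib m * Nat.fib 59 + Nat.fib (m + 1) * Nat.fib 60 := h
    _ ≡ Nat.fib m * 1 + Nat.fib (m + 1) * 0 [MOD 10] :=
        ((Nat.ModEq.refl _).mul h59).add ((Nat.ModEq.refl _).mul h60)
    _ = Nat.fib m := by ring

lemma fib_mod10 (n : ℕ) : Nat.fib n ≡ Nat.fib (n % 60) [MOD 10] := by
  induction n using Nat.strong_induction_on with
  | _ n ih =>
    by_cases h : n < 60
    · rw [Nat.mod_eq_of_lt h]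
    · have : n = (n - 60) + 60 := by omega
      rw [this]
      calc Nat.fib ((n - 60) + 60) ≡ Nat.fib (n - 60) [MOD 10] := fib_add_60 _
        _ ≡ Nat.fib ((n - 60) % 60) [MOD 10] := ih _ (by omega)
        _ = Nat.fib (((n - 60) + 60) % 60) := by rw [Nat.add_mod_right]

lemma key : ∀ s < 60, s % 4 = 3 → s % 3 ≠ 0 →
    (1 + Nat.fib ((s + 1) % 60) % 10 + Nat.fib ((s - 1) % 60) % 10) % 10 = 0 := by decide

theorem one_add_fib_r_add_one (r : ℕ) (hr : 0 < r) (h4 : r % 4 = 3) (h3 : ¬ (3 ∣ r)) :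
    1 + fibZ ((r : ℤ) + 1) ≡ fibZ (1 - (r : ℤ)) [ZMOD 10] := by
  have hr3 : 3 ≤ r := by omega
  have h1 : fibZ ((r : ℤ) + 1) = (Nat.fib (r + 1) : ℤ) := by
    rw [fibZ, if_pos (by positivity)]
    norm_num
  have h2 : fibZ (1 - (r : ℤ)) = -(Nat.fib (r - 1) : ℤ) := by
    rw [fibZ, if_neg (by omega)]
    have ht : (-(1 - (r:ℤ))).toNat = r - 1 := by omega
    rw [ht]
    have hodd : Odd ((r - 1) + 1) := by
      refine ⟨r / 2, by omega⟩
    rw [hodd.neg_one_pow]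
    ring
  rw [h1, h2]
  -- reduce to divisibility of a natural number
  have hnat : (1 + Nat.fib (r + 1) + Nat.fib (r - 1)) % 10 = 0 := by
    have e1 : Nat.fib (r + 1) % 10 = Nat.fib ((r % 60 + 1) % 60) % 10 := by
      have := fib_mod10 (r + 1)
      have h' : (r + 1) % 60 = (r % 60 + 1) % 60 := by omega
      rwa [h'] at this
    have e2 : Nat.fib (r - 1) % 10 = Nat.fib ((r % 60 - 1) % 60) % 10 := by
      have := fib_mod10 (r - 1)
      have h' : (r - 1) % 60 = (r % 60 - 1) % 60 := by omega
      rwa [h'] at this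
    have hk := key (r % 60) (Nat.mod_lt _ (by norm_num)) (by omega)
      (by intro h; exact h3 (by omega))
    omega
  have hdvd : (10 : ℤ) ∣ (1 + (Nat.fib (r + 1) : ℤ) + (Nat.fib (r - 1) : ℤ)) := by
    have : (10 : ℕ) ∣ (1 + Nat.fib (r + 1) + Nat.fib (r - 1)) := Nat.dvd_of_mod_eq_zero hnat
    exact_mod_cast Int.natCast_dvd_natCast.mpr this
  have : (1 + (Nat.fib (r + 1) : ℤ)) - (-(Nat.fib (r - 1) : ℤ)) =
      1 + (Nat.fib (r + 1) : ℤ) + (Nat.fib (r - 1) : ℤ) := by ring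
  exact Int.ModEq.symm (Int.modEq_iff_dvd.mpr (by rw [this]; exact hdvd))
end

section
/- If r ≡ 1 (mod 4) and 3 does not divide r, then for all k ≥ 0 and all j ≥ 1, F_{k+r(j-1)} + F_{k+rj} ≡ F_{k+r(j+1)} (mod 10) (forward quasi-Fibonacci property). -/
lemma fib_per2 : ∀ n, Nat.fib (n + 60) % 10 = Nat.fib n % 10 ∧
    Nat.fib (n + 61) % 10 = Nat.fib (n + 1) % 10 := by
  intro n
  induction n with
  | zero => exact ⟨by decide, by decide⟩
  | succ m ih =>
    refine ⟨by simpa [show m + 1 + 60 = m + 61 from by ring] using ih.2, ?_⟩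
    have e1 : Nat.fib (m + 1 + 61) = Nat.fib (m + 60) + Nat.fib (m + 61) := by
      have := Nat.fib_add_two (n := m + 60)
      simpa [show m + 60 + 2 = m + 1 + 61 from by ring,
        show m + 60 + 1 = m + 61 from by ring] using this
    have e2 : Nat.fib (m + 1 + 1) = Nat.fib m + Nat.fib (m + 1) := by
      have := Nat.fib_add_two (n := m)
      simpa [show m + 2 = m + 1 + 1 from by ring] using this
    rw [e1, e2, Nat.add_mod, ih.1, ih.2, ← Nat.add_mod]

lemma fib_per_mul : ∀ q n, Nat.fib (n + 60 * q) % 10 = Nat.fib n % 10 := by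
  intro q
  induction q with
  | zero => simp
  | succ q ih =>
    intro n
    rw [show n + 60 * (q + 1) = (n + 60) + 60 * q from by ring, ih, (fib_per2 n).1]

lemma fib_mod60 (n : ℕ) : Nat.fib n % 10 = Nat.fib (n % 60) % 10 := by
  conv_lhs => rw [show n = n % 60 + 60 * (n / 60) from by omega]
  rw [fib_per_mul]

lemma base_key : ∀ s < 60, s % 4 = 1 → s % 3 ≠ 0 →
    Nat.fib (2 * s % 60) % 10 = Nat.fib s % 10 ∧
    Nat.fib ((2 * s + 1) % 60) % 10 = (1 % 10 + Nat.fib ((s + 1) % 60) % 10) % 10 := by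
  decide

lemma base_cases (r : ℕ) (h4 : r % 4 = 1) (h3 : ¬ (3 ∣ r)) :
    Nat.fib (2 * r) % 10 = Nat.fib r % 10 ∧
    Nat.fib (2 * r + 1) % 10 = (1 + Nat.fib (r + 1)) % 10 := by
  have hs4 : r % 60 % 4 = 1 := by omega
  have hs3 : r % 60 % 3 ≠ 0 := by
    intro h; exact h3 (by omega)
  have h2r : (2 * r) % 60 = (2 * (r % 60)) % 60 := by omega
  have h2r1 : (2 * r + 1) % 60 = (2 * (r % 60) + 1) % 60 := by omega
  have hr1 : (r + 1) % 60 = (r % 60 + 1) % 60 := by omega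
  rw [fib_mod60 (2 * r), fib_mod60 r, fib_mod60 (2 * r + 1), Nat.add_mod 1 (Nat.fib (r + 1)),
    fib_mod60 (r + 1), h2r, h2r1, hr1]
  exact base_key (r % 60) (by omega) hs4 hs3

theorem forward_quasi_fibonacci (r : ℕ) (h4 : r % 4 = 1) (h3 : ¬ (3 ∣ r)) :
    ∀ k : ℕ, ∀ j : ℕ, 1 ≤ j →
      Nat.fib (k + r * (j - 1)) + Nat.fib (k + r * j) ≡ Nat.fib (k + r * (j + 1)) [MOD 10] := by
  obtain ⟨hb1, hb2⟩ := base_cases r h4 h3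
  have key : ∀ a : ℕ, Nat.fib a + Nat.fib (a + r) ≡ Nat.fib (a + 2 * r) [MOD 10] := by
    intro a
    induction a using Nat.strong_induction_on with
    | _ a ih =>
      match a with
      | 0 => simpa [Nat.ModEq] using hb1.symm
      | 1 => simpa [Nat.ModEq, Nat.add_comm] using hb2.symm
      | (m + 2) =>
        have h1 := ih m (by omega)
        have h2 := ih (m + 1) (by omega)
        have f1 : Nat.fib (m + 2) = Nat.fib m + Nat.fib (m + 1) :=
          Nat.fib_add_two (n := m)
        have f2 : Nat.fib (m + 2 + r) = Nat.fib (m + r) + Nat.fib (m + r + 1) := by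
          have := Nat.fib_add_two (n := m + r)
          simpa [show m + r + 2 = m + 2 + r from by ring] using this
        have f3 : Nat.fib (m + 2 + 2 * r) = Nat.fib (m + 2 * r) + Nat.fib (m + 2 * r + 1) := by
          have := Nat.fib_add_two (n := m + 2 * r)
          simpa [show m + 2 * r + 2 = m + 2 + 2 * r from by ring] using this
        rw [f1, f2, f3]
        rw [show m + 1 + r = m + r + 1 from by ring,
          show m + 1 + 2 * r = m + 2 * r + 1 from by ring] at h2
        calc Nat.fib m + Nat.fib (m + 1) + (Nat.fib (m + r) + Nat.fib (m + r + 1))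
            = (Nat.fib m + Nat.fib (m + r)) + (Nat.fib (m + 1) + Nat.fib (m + r + 1)) := by ring
          _ ≡ Nat.fib (m + 2 * r) + Nat.fib (m + 2 * r + 1) [MOD 10] := Nat.ModEq.add h1 h2
  intro k j hj
  obtain ⟨i, rfl⟩ : ∃ i, j = i + 1 := ⟨j - 1, by omega⟩
  have e1 : k + r * (i + 1 - 1) = k + r * i := by rw [Nat.add_sub_cancel]
  have e2 : k + r * (i + 1) = (k + r * i) + r := by ring
  have e3 : k + r * (i + 1 + 1) = (k + r * i) + 2 * r := by ring
  rw [e1, e2, e3]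
  exact key (k + r * i)
end

section
/- If gcd(r, 60) = 1, then F_r mod 10 is a unit modulo 10, i.e., F_r mod 10 ∈ {1, 3, 7, 9}. -/
/-! Modulo 10 the Fibonacci sequence has period 60 (the Pisano period), since
`(F₆₀, F₆₁) ≡ (0, 1)`. So `F_r ≡ F_{r % 60}`, and `r % 60` is again coprime to 60,
which leaves a finite check over the residues below 60. -/

theorem Nat.fib_add_modEq_of_modEq {k m : ℕ} (h₀ : Nat.fib m ≡ 0 [MOD k])
    (h₁ : Nat.fib (m + 1) ≡ 1 [MOD k]) (n : ℕ) : Nat.fib (n + m) ≡ Nat.fib n [MOD k] := by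
  cases n with
  | zero => simpa using h₀
  | succ n =>
    rw [Nat.add_right_comm, Nat.fib_add]
    calc Nat.fib n * Nat.fib m + Nat.fib (n + 1) * Nat.fib (m + 1)
        ≡ Nat.fib n * 0 + Nat.fib (n + 1) * 1 [MOD k] := by gcongr
      _ = Nat.fib (n + 1) := by ring

theorem Nat.periodic_fib_mod_ten : Function.Periodic (fun n => Nat.fib n % 10) 60 :=
  Nat.fib_add_modEq_of_modEq (by decide) (by decide)

theorem Nat.fib_mod_ten_mem_of_coprime_sixty_of_lt :
    ∀ s < 60, Nat.Coprime s 60 → Nat.fib s % 10 ∈ ({1, 3, 7, 9} : Set ℕ) := by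
  decide

theorem fib_mod_ten_unit (r : ℕ) (h : Nat.gcd r 60 = 1) :
    Nat.fib r % 10 ∈ ({1, 3, 7, 9} : Set ℕ) := by
  rw [← Nat.periodic_fib_mod_ten.map_mod_nat r]
  exact Nat.fib_mod_ten_mem_of_coprime_sixty_of_lt _ (Nat.mod_lt _ (by norm_num))
    ((ZMod.coprime_mod_iff_coprime r 60).2 h)
end

section
/- If gcd(r,60) = 1 and r ≡ 3 (mod 4), then for any k ≥ 0 there exists N ∈ {0,1,...,59} such that for all j ≥ 0, F_{k+rj} ≡ F_{N-j} (mod 10), where F is extended to negative indices by F_{-n} = (-1)^{n+1} F_n (the subsequence is the Fibonacci sequence mod 10 run in reverse). -/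
lemma fib_period : ∀ n : ℕ, Nat.fib (n + 60) % 10 = Nat.fib n % 10 := by
  have key : ∀ n : ℕ, Nat.fib (n + 60) % 10 = Nat.fib n % 10 ∧
      Nat.fib (n + 61) % 10 = Nat.fib (n + 1) % 10 := by
    intro n
    induction n with
    | zero => exact ⟨by decide, by decide⟩
    | succ m ih =>
      constructor
      · rw [show m + 1 + 60 = m + 61 from by ring]; exact ih.2
      · rw [show m + 1 + 61 = m + 62 from by ring, show m + 1 + 1 = m + 2 from by ring]
        have h1 : Nat.fib (m + 62) = Nat.fib (m + 60) + Nat.fib (m + 61) := by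
          rw [show m + 62 = (m + 60) + 2 from by ring, Nat.fib_add_two,
            show m + 60 + 1 = m + 61 from by ring]
        have h2 : Nat.fib (m + 2) = Nat.fib m + Nat.fib (m + 1) := Nat.fib_add_two
        have := ih.1; have := ih.2
        omega
  exact fun n => (key n).1

lemma fib_neg_mod : ∀ a : ℕ, a < 61 →
    ((-1 : ℤ)) ^ (a + 1) * (Nat.fib a : ℤ) % 10 = (Nat.fib ((60 - a) % 60) : ℤ) % 10 := by
  decide

lemma fibZ_mod (n : ℤ) : fibZ n ≡ (Nat.fib ((n % 60).toNat) : ℤ) [ZMOD 10] := by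
  show fibZ n % 10 = _ % 10
  by_cases hn : 0 ≤ n
  · obtain ⟨m, rfl⟩ := Int.eq_ofNat_of_zero_le hn
    rw [fibZ, if_pos hn]
    have h1 : ((m : ℤ)).toNat = m := Int.toNat_natCast m
    have h2 : (((m : ℤ)) % 60).toNat = m % 60 := by omega
    rw [h1, h2]
    have := fib_mod60 m
    omega
  · push_neg at hn
    obtain ⟨m, hm⟩ : ∃ m : ℕ, n = -(m : ℤ) := ⟨(-n).toNat, by omega⟩
    subst hm
    rw [fibZ, if_neg (by omega)]
    have h1 : (-(-(m : ℤ))).toNat = m := by omega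
    rw [h1]
    set a := m % 60 with ha
    obtain ⟨q, hq⟩ : ∃ q, m = 60 * q + a := ⟨m / 60, by omega⟩
    have hs : ((-1 : ℤ)) ^ (m + 1) = (-1) ^ (a + 1) := by
      rw [hq, show 60 * q + a + 1 = 60 * q + (a + 1) from by ring, pow_add, pow_mul]
      norm_num
    have hfib : Nat.fib m % 10 = Nat.fib a % 10 := fib_mod60 m
    have hmul : ((-1 : ℤ)) ^ (a + 1) * (Nat.fib m : ℤ) % 10
        = ((-1 : ℤ)) ^ (a + 1) * (Nat.fib a : ℤ) % 10 := by
      have : (Nat.fib m : ℤ) ≡ (Nat.fib a : ℤ) [ZMOD 10] := by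
        show _ % 10 = _ % 10; omega
      exact (Int.ModEq.mul_left _ this)
    have hneg := fib_neg_mod a (by omega)
    have htn : ((-(m : ℤ)) % 60).toNat = (60 - a) % 60 := by omega
    rw [hs, htn, hmul, hneg]

def afun : ℕ → ℕ
  | 7 => 17 | 11 => 49 | 19 => 41 | 23 => 13 | 31 => 29 | 43 => 53 | 47 => 37 | _ => 1
def bfun : ℕ → ℕ
  | 7 => 45 | 11 => 30 | 19 => 0 | 23 => 15 | 31 => 30 | 43 => 15 | 47 => 45 | _ => 0
def nfun (r k : ℕ) : ℕ := (afun r * k + bfun r) % 60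

set_option maxRecDepth 10000 in
lemma core : ∀ r' < 60, r' % 4 = 3 → Nat.gcd r' 60 = 1 → ∀ k' < 60, ∀ j' < 60,
    Nat.fib ((k' + r' * j') % 60) % 10 = Nat.fib ((nfun r' k' + 60 - j') % 60) % 10 := by
  decide

theorem reverse_complete_fibonacci (r k : ℕ) (h : Nat.gcd r 60 = 1) (h4 : r % 4 = 3) :
    ∃ N : ℕ, N ≤ 59 ∧ ∀ j : ℕ,
      fibZ ((k : ℤ) + (r : ℤ) * (j : ℤ)) ≡ fibZ ((N : ℤ) - (j : ℤ)) [ZMOD 10] := by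
  set r' := r % 60 with hr'
  set k' := k % 60 with hk'
  refine ⟨nfun r' k', by have : nfun r' k' < 60 := Nat.mod_lt _ (by norm_num); omega, ?_⟩
  set N := nfun r' k' with hN
  have hNlt : N < 60 := Nat.mod_lt _ (by norm_num)
  have hr4 : r' % 4 = 3 := by
    rw [hr', Nat.mod_mod_of_dvd r (by norm_num : (4:ℕ) ∣ 60)]; exact h4
  have hrg : Nat.gcd r' 60 = 1 := by
    rw [hr', ← Nat.gcd_rec, Nat.gcd_comm]; exact h
  intro j
  set j' := j % 60 with hj'
  have hmod : (k + r * j) % 60 = (k' + r' * j') % 60 :=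
    ((Nat.mod_modEq k 60).symm.add ((Nat.mod_modEq r 60).symm.mul (Nat.mod_modEq j 60).symm))
  have hcast : (k : ℤ) + (r : ℤ) * (j : ℤ) = ((k + r * j : ℕ) : ℤ) := by push_cast; ring
  have e1 : (((k : ℤ) + (r : ℤ) * (j : ℤ)) % 60).toNat = (k' + r' * j') % 60 := by
    rw [hcast]
    generalize k + r * j = x at hmod ⊢
    generalize (k' + r' * j') % 60 = y at hmod ⊢
    omega
  obtain ⟨q, hq⟩ : ∃ q, j = 60 * q + j' := ⟨j / 60, by omega⟩
  have e2 : (((N : ℤ) - (j : ℤ)) % 60).toNat = (N + 60 - j') % 60 := by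
    have hj : (j : ℤ) = 60 * (q : ℤ) + (j' : ℤ) := by exact_mod_cast congrArg (Nat.cast (R := ℤ)) hq
    rw [hj]
    have hj'lt : j' < 60 := Nat.mod_lt _ (by norm_num)
    omega
  have h1 := fibZ_mod ((k : ℤ) + (r : ℤ) * (j : ℤ))
  have h2 := fibZ_mod ((N : ℤ) - (j : ℤ))
  rw [e1] at h1
  rw [e2] at h2
  have hc := core r' (Nat.mod_lt _ (by norm_num)) hr4 hrg k' (Nat.mod_lt _ (by norm_num)) j'
    (Nat.mod_lt _ (by norm_num))
  rw [← hN] at hc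
  have hcz : (Nat.fib ((k' + r' * j') % 60) : ℤ) ≡ (Nat.fib ((N + 60 - j') % 60) : ℤ) [ZMOD 10] := by
    show _ % 10 = _ % 10; omega
  exact h1.trans (hcz.trans h2.symm)
end
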